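/- arXiv:1401.3541 — 2 statements merged into one kernel-verified Lean document; each statement's English description precedes it below -/
import Mathlib

section
/- Let θ, a : ℝⁿ → ℝ be continuous, let θ̄ ∈ ℝ, and define h : ℝⁿ → ℝ by h(x) = a(x) if θ(x) < θ̄ and h(x) = θ̄ − θ(x) otherwise. Let x₀ satisfy θ(x₀) = θ̄ (so h(x₀) = 0) and suppose x₀ lies in the closure of {x : θ(x) < θ̄}. Then the Filippov regularization of h at x₀ is the segment joining 0 and a(x₀): g(x₀) = {u·a(x₀) + (1−u)·0 : u ∈ [0,1]}. -/
/-- The Filippov regularization of a scalar-valued `f` at `x`: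
`g(x) = ⋂_{γ>0} closedConvexHull (f '' B(x,γ))`. -/
noncomputable def filippov {n : ℕ}
    (f : EuclideanSpace ℝ (Fin n) → ℝ)
    (x : EuclideanSpace ℝ (Fin n)) : Set ℝ :=
  ⋂ γ > (0 : ℝ), closedConvexHull ℝ (f '' Metric.ball x γ)

/-!
Near `x₀` every value of `h` is close either to `a x₀` or to `θ̄ - θ x₀ = 0`, so for each
`ε > 0` the closed `ε`-neighbourhood of the segment `[0, a x₀]` (closed and convex) contains
`h(B(x₀, γ))` for small `γ`, hence its closed convex hull. Conversely `0 = h x₀` and `a x₀`,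
the limit of `h = a` along `{θ < θ̄}` (which accumulates at `x₀`), lie in the closure of every
`h(B(x₀, γ))`, so the whole segment lies in every closed convex hull.
-/

open Filter Metric Set Topology

section

variable {n : ℕ} {f : EuclideanSpace ℝ (Fin n) → ℝ} {x : EuclideanSpace ℝ (Fin n)}

theorem convex_filippov : Convex ℝ (filippov f x) :=
  convex_iInter₂ fun _ _ => convex_closedConvexHull

theorem self_mem_filippov : f x ∈ filippov f x :=
  mem_iInter₂.2 fun _ hγ => subset_closedConvexHull ⟨x, mem_ball_self hγ, rfl⟩

theorem mem_filippov_of_mapClusterPt {y : ℝ} (hy : MapClusterPt y (𝓝 x) f) :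
    y ∈ filippov f x :=
  mem_iInter₂.2 fun _ hγ => closure_subset_closedConvexHull <|
    clusterPt_iff_forall_mem_closure.1 hy _ (image_mem_map (ball_mem_nhds x hγ))

theorem filippov_subset_of_eventually_mem_cthickening {K : Set ℝ} (hK : Convex ℝ K)
    (hKc : IsClosed K) (hf : ∀ ε > 0, ∀ᶠ z in 𝓝 x, f z ∈ cthickening ε K) :
    filippov f x ⊆ K := by
  intro y hy
  rw [← hKc.closure_eq, closure_eq_iInter_cthickening, mem_iInter₂]
  intro ε hε
  obtain ⟨γ, hγ, hball⟩ := eventually_nhds_iff_ball.1 (hf ε hε)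
  have hsub : f '' ball x γ ⊆ cthickening ε K := image_subset_iff.2 hball
  exact closedConvexHull_min hsub (hK.cthickening ε) isClosed_cthickening
    (mem_iInter₂.1 hy γ hγ)

theorem filippov_subset_segment {g₁ g₂ : EuclideanSpace ℝ (Fin n) → ℝ} {y₁ y₂ : ℝ}
    (hf : ∀ z, f z = g₁ z ∨ f z = g₂ z)
    (h₁ : Tendsto g₁ (𝓝 x) (𝓝 y₁)) (h₂ : Tendsto g₂ (𝓝 x) (𝓝 y₂)) :
    filippov f x ⊆ segment ℝ y₁ y₂ := by
  refine filippov_subset_of_eventually_mem_cthickening (convex_segment y₁ y₂)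
    (segment_eq_uIcc y₁ y₂ ▸ isClosed_Icc) fun ε hε => ?_
  filter_upwards [h₁ (closedBall_mem_nhds y₁ hε), h₂ (closedBall_mem_nhds y₂ hε)]
    with z hz₁ hz₂
  rcases hf z with hz | hz <;> rw [hz]
  · exact mem_cthickening_of_dist_le _ _ _ _ (left_mem_segment ℝ y₁ y₂) hz₁
  · exact mem_cthickening_of_dist_le _ _ _ _ (right_mem_segment ℝ y₁ y₂) hz₂

end

/-- At a boundary point `x₀` with `θ(x₀) = θ̄` lying in the closure of
`{θ < θ̄}`, the Filippov regularization of the piecewise map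
`h = a` on `{θ < θ̄}`, `h = θ̄ - θ` otherwise, is the segment joining
`0` and `a(x₀)`. -/
theorem filippov_piecewise_boundary {n : ℕ}
    (θ a : EuclideanSpace ℝ (Fin n) → ℝ) (θbar : ℝ)
    (hθ : Continuous θ) (ha : Continuous a)
    (h : EuclideanSpace ℝ (Fin n) → ℝ)
    (hdef : ∀ x, h x = if θ x < θbar then a x else θbar - θ x)
    (x₀ : EuclideanSpace ℝ (Fin n))
    (hx₀ : θ x₀ = θbar)
    (hcl : x₀ ∈ closure {x | θ x < θbar}) :
    filippov h x₀ = {y : ℝ | ∃ u ∈ Set.Icc (0 : ℝ) 1, y = u * a x₀ + (1 - u) * 0} := by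
  have h_x₀ : h x₀ = 0 := by simp [hdef, hx₀]
  have h_cases : ∀ z, h z = a z ∨ h z = θbar - θ z := fun z => by
    rw [hdef]; split_ifs <;> simp
  have h_gap : Tendsto (fun z => θbar - θ z) (𝓝 x₀) (𝓝 0) := by
    simpa [hx₀] using (tendsto_const_nhds (x := θbar)).sub (hθ.tendsto x₀)
  have h_cluster : MapClusterPt (a x₀) (𝓝 x₀) h := by
    have := mem_closure_iff_nhdsWithin_neBot.1 hcl
    have h_eq : a =ᶠ[𝓝[{x | θ x < θbar}] x₀] h :=
      eventually_nhdsWithin_of_forall fun z hz => (if_pos hz ▸ hdef z).symm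
    exact (((ha.tendsto x₀).mono_left nhdsWithin_le_nhds).congr' h_eq).mapClusterPt.mono
      nhdsWithin_le_nhds
  have h_segment : filippov h x₀ = segment ℝ 0 (a x₀) := by
    refine Subset.antisymm ?_ ?_
    · exact segment_symm ℝ (a x₀) 0 ▸ filippov_subset_segment h_cases (ha.tendsto x₀) h_gap
    · exact convex_filippov.segment_subset (h_x₀ ▸ self_mem_filippov)
        (mem_filippov_of_mapClusterPt h_cluster)
  rw [h_segment, segment_eq_image]
  ext y
  simp [eq_comm]
end

section
/- Let f : ℝⁿ → ℝ be bounded. Then for every x, the Filippov regularization of f at x is the closed interval g(x) = [liminf_{y→x} f(y), limsup_{y→x} f(y)], where liminf and limsup are taken along the (non-punctured) neighborhood filter of x. -/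
/-- The closed convex hull of a nonempty bounded set of reals is the closed interval
between its infimum and supremum. -/
lemma closedConvexHull_real_eq_Icc {S : Set ℝ} (hne : S.Nonempty)
    (hbd : BddBelow S) (hbu : BddAbove S) :
    closedConvexHull ℝ S = Set.Icc (sInf S) (sSup S) := by
  apply Set.Subset.antisymm
  · exact closedConvexHull_min (fun y hy => ⟨csInf_le hbd hy, le_csSup hbu hy⟩)
      (convex_Icc _ _) isClosed_Icc
  · have h1 : sInf S ∈ closedConvexHull ℝ S :=
      closure_subset_closedConvexHull (csInf_mem_closure hne hbd)
    have h2 : sSup S ∈ closedConvexHull ℝ S :=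
      closure_subset_closedConvexHull (csSup_mem_closure hne hbu)
    have hconv : Convex ℝ (closedConvexHull ℝ S) := convex_closedConvexHull
    exact hconv.ordConnected.out h1 h2

/-- For bounded scalar `f`, the Filippov regularization at `x` is the closed
interval `[liminf_{y→x} f(y), limsup_{y→x} f(y)]`, with `liminf`/`limsup`
taken along the neighborhood filter of `x`. -/
theorem filippov_eq_Icc_liminf_limsup {n : ℕ}
    (f : EuclideanSpace ℝ (Fin n) → ℝ)
    (hf : ∃ M : ℝ, ∀ y, |f y| ≤ M)
    (x : EuclideanSpace ℝ (Fin n)) :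
    filippov f x =
      Set.Icc (Filter.liminf f (nhds x)) (Filter.limsup f (nhds x)) := by
  obtain ⟨M, hM⟩ := hf
  have hub : ∀ y, f y ≤ M := fun y => (abs_le.1 (hM y)).2
  have hlb : ∀ y, -M ≤ f y := fun y => (abs_le.1 (hM y)).1
  have hbdd_above : Filter.IsBoundedUnder (· ≤ ·) (nhds x) f :=
    Filter.isBoundedUnder_of ⟨M, hub⟩
  have hbdd_below : Filter.IsBoundedUnder (· ≥ ·) (nhds x) f :=
    Filter.isBoundedUnder_of ⟨-M, hlb⟩
  have hcobdd_above : Filter.IsCoboundedUnder (· ≤ ·) (nhds x) f :=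
    hbdd_below.isCoboundedUnder_flip
  have hcobdd_below : Filter.IsCoboundedUnder (· ≥ ·) (nhds x) f :=
    hbdd_above.isCoboundedUnder_flip
  set A := Filter.liminf f (nhds x) with hA
  set B := Filter.limsup f (nhds x) with hB
  -- for each γ > 0, compute the hull
  have hball : ∀ γ : ℝ, 0 < γ → (Metric.ball x γ).Nonempty :=
    fun γ hγ => ⟨x, Metric.mem_ball_self hγ⟩
  have himg : ∀ γ : ℝ, 0 < γ → (f '' Metric.ball x γ).Nonempty :=
    fun γ hγ => (hball γ hγ).image f
  have hbb : ∀ γ : ℝ, BddBelow (f '' Metric.ball x γ) :=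
    fun γ => ⟨-M, fun y ⟨z, _, hz⟩ => hz ▸ hlb z⟩
  have hba : ∀ γ : ℝ, BddAbove (f '' Metric.ball x γ) :=
    fun γ => ⟨M, fun y ⟨z, _, hz⟩ => hz ▸ hub z⟩
  have hhull : ∀ γ : ℝ, 0 < γ → closedConvexHull ℝ (f '' Metric.ball x γ) =
      Set.Icc (sInf (f '' Metric.ball x γ)) (sSup (f '' Metric.ball x γ)) :=
    fun γ hγ => closedConvexHull_real_eq_Icc (himg γ hγ) (hbb γ) (hba γ)
  ext y
  simp only [filippov, Set.mem_iInter, Set.mem_Icc]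
  constructor
  · intro h
    constructor
    · -- A ≤ y
      refine le_of_forall_lt_imp_le_of_dense fun c hc => ?_
      have hev : ∀ᶠ z in nhds x, c < f z :=
        Filter.eventually_lt_of_lt_liminf hc hbdd_below
      rw [Metric.eventually_nhds_iff_ball] at hev
      obtain ⟨γ, hγ, hγ'⟩ := hev
      have hy := h γ hγ
      rw [hhull γ hγ] at hy
      have : c ≤ sInf (f '' Metric.ball x γ) :=
        le_csInf (himg γ hγ) fun b ⟨z, hz, hzb⟩ => hzb ▸ (hγ' z hz).le
      exact this.trans hy.1
    · -- y ≤ B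
      refine le_of_forall_gt_imp_ge_of_dense fun c hc => ?_
      have hev : ∀ᶠ z in nhds x, f z < c :=
        Filter.eventually_lt_of_limsup_lt hc hbdd_above
      rw [Metric.eventually_nhds_iff_ball] at hev
      obtain ⟨γ, hγ, hγ'⟩ := hev
      have hy := h γ hγ
      rw [hhull γ hγ] at hy
      have : sSup (f '' Metric.ball x γ) ≤ c :=
        csSup_le (himg γ hγ) fun b ⟨z, hz, hzb⟩ => hzb ▸ (hγ' z hz).le
      exact hy.2.trans this
  · rintro ⟨h1, h2⟩ γ hγ
    rw [hhull γ hγ]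
    have hball_mem : Metric.ball x γ ∈ nhds x := Metric.ball_mem_nhds x hγ
    constructor
    · refine le_trans ?_ h1
      refine Filter.le_liminf_of_le hcobdd_below ?_
      filter_upwards [hball_mem] with z hz
      exact csInf_le (hbb γ) ⟨z, hz, rfl⟩
    · refine h2.trans ?_
      refine Filter.limsup_le_of_le hcobdd_above ?_
      filter_upwards [hball_mem] with z hz
      exact le_csSup (hba γ) ⟨z, hz, rfl⟩
end
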